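/- arXiv:1307.6391 — 7 statements merged into one kernel-verified Lean document; each statement's English description precedes it below -/
import Mathlib

section
/- The number of partitions of m into exactly r parts is at most (m + r^2/2)^{r-1} / (r!(r-1)!). -/
/-!
Adding `i` to the `i`-th smallest part (`i = 0, …, r - 1`) turns a partition of `m` into `r` parts
into `r` distinct positive integers with sum `N = m + r(r-1)/2`. Listing these in each of the `r!`
possible orders gives distinct compositions of `N` into `r` parts, of which there are
`(N-1).choose (r-1) ≤ (N-1)^(r-1) / (r-1)!` by stars and bars. Finally `N - 1 ≤ m + r²/2`.
-/

open Finset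
open scoped Nat

theorem Equiv.Perm.eq_one_of_monotone_comp {n : ℕ} {α : Type*} [Preorder α] {f : Fin n → α}
    (hf : StrictMono f) {σ : Equiv.Perm (Fin n)} (h : Monotone (f ∘ σ)) : σ = 1 :=
  σ.monotone_iff.1 fun _ _ hij => hf.le_iff_le.1 (h hij)

theorem StrictMono.eq_and_eq_of_comp_perm_eq {n : ℕ} {α : Type*} [Preorder α] {f g : Fin n → α}
    (hf : StrictMono f) (hg : StrictMono g) {σ τ : Equiv.Perm (Fin n)} (h : f ∘ σ = g ∘ τ) :
    f = g ∧ σ = τ := by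
  have hfg : f ∘ ⇑(σ * τ⁻¹) = g := by
    rw [Equiv.Perm.coe_mul, ← Function.comp_assoc, h, Function.comp_assoc, ← Equiv.Perm.coe_mul,
      mul_inv_cancel, Equiv.Perm.coe_one, Function.comp_id]
  have hστ : σ * τ⁻¹ = 1 := Equiv.Perm.eq_one_of_monotone_comp hf (hfg ▸ hg.monotone)
  rw [hστ, Equiv.Perm.coe_one, Function.comp_id] at hfg
  exact ⟨hfg, mul_inv_eq_one.1 hστ⟩

namespace Finset.Nat

theorem card_antidiagonalTuple (k n : ℕ) :
    #(antidiagonalTuple k n) = (k + n - 1).choose n :=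
  calc #(antidiagonalTuple k n)
      = Nat.card {f : Fin k → ℕ // ∑ i, f i = n} := by
        rw [← Nat.card_eq_finsetCard]
        simp only [mem_antidiagonalTuple]
    _ = Nat.card (Sym (Fin k) n) := Nat.card_congr (Sym.equivNatSumOfFintype (Fin k) n).symm
    _ = (k + n - 1).choose n := by
        rw [Sym.natCard_sym_eq_choose, Nat.card_eq_fintype_card, Fintype.card_fin]

def positiveAntidiagonalTuple (k n : ℕ) : Finset (Fin k → ℕ) :=
  {f ∈ antidiagonalTuple k n | ∀ i, 0 < f i}

theorem mem_positiveAntidiagonalTuple {k n : ℕ} {f : Fin k → ℕ} :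
    f ∈ positiveAntidiagonalTuple k n ↔ ∑ i, f i = n ∧ ∀ i, 0 < f i := by
  rw [positiveAntidiagonalTuple, mem_filter, mem_antidiagonalTuple]

theorem card_positiveAntidiagonalTuple_le (k n : ℕ) :
    #(positiveAntidiagonalTuple k n) ≤ (n - 1).choose (k - 1) := by
  rcases (positiveAntidiagonalTuple k n).eq_empty_or_nonempty with hempty | ⟨f, hf⟩
  · simp [hempty]
  obtain ⟨hsum, hpos⟩ := mem_positiveAntidiagonalTuple.1 hf
  have hkn : k ≤ n := by
    simpa [← hsum] using card_nsmul_le_sum univ f 1 fun i _ => hpos i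
  have hk : k = 0 → n = 0 := by
    rintro rfl
    simpa using hsum.symm
  calc #(positiveAntidiagonalTuple k n)
      ≤ #(antidiagonalTuple k (n - k)) := by
        refine card_le_card_of_injOn (fun f i => f i - 1) (fun f hf => ?_) fun f hf g hg hfg => ?_
        · obtain ⟨hsum, hpos⟩ := mem_positiveAntidiagonalTuple.1 hf
          rw [mem_coe, mem_antidiagonalTuple, sum_tsub_distrib _ fun i _ => hpos i, hsum]
          simp
        · funext i
          have hfi := (mem_positiveAntidiagonalTuple.1 hf).2 i
          have hgi := (mem_positiveAntidiagonalTuple.1 hg).2 i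
          have hi : f i - 1 = g i - 1 := congrFun hfg i
          omega
    _ = (n - 1).choose (k - 1) := by
        rw [card_antidiagonalTuple, Nat.add_sub_cancel' hkn]
        exact Nat.choose_symm_of_eq_add (by omega)

end Finset.Nat

namespace Nat.Partition

variable {m r : ℕ} (P : m.Partition)

/-- Padded with `0` when `P` has fewer than `r` parts. -/
def sortedParts (r : ℕ) : Fin r → ℕ := fun i => P.parts.sort.getD i 0

def shiftedParts (r : ℕ) : Fin r → ℕ := fun i => P.sortedParts r i + i

variable {P}

theorem ofFn_sortedParts (hP : P.parts.card = r) :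
    List.ofFn (P.sortedParts r) = P.parts.sort := by
  refine List.ext_getElem (by simp [hP]) fun i _ hi => ?_
  simp [sortedParts, List.getElem?_eq_getElem hi]

theorem map_sortedParts (hP : P.parts.card = r) : univ.val.map (P.sortedParts r) = P.parts := by
  rw [Fin.univ_val_map, ofFn_sortedParts hP, Multiset.sort_eq]

theorem monotone_sortedParts (hP : P.parts.card = r) : Monotone (P.sortedParts r) := by
  rw [← List.sortedLE_ofFn_iff, ofFn_sortedParts hP, List.sortedLE_iff_pairwise]
  exact Multiset.pairwise_sort _ _

theorem sortedParts_pos (hP : P.parts.card = r) (i : Fin r) : 0 < P.sortedParts r i :=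
  P.parts_pos (map_sortedParts hP ▸ Multiset.mem_map_of_mem _ (mem_univ i))

theorem sum_sortedParts (hP : P.parts.card = r) : ∑ i, P.sortedParts r i = m := by
  rw [← sum_map_val, map_sortedParts hP, P.parts_sum]

theorem strictMono_shiftedParts (hP : P.parts.card = r) : StrictMono (P.shiftedParts r) :=
  (monotone_sortedParts hP).add_strictMono Fin.val_strictMono

theorem shiftedParts_pos (hP : P.parts.card = r) (i : Fin r) : 0 < P.shiftedParts r i :=
  Nat.add_pos_left (sortedParts_pos hP i) _

theorem sum_shiftedParts (hP : P.parts.card = r) :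
    ∑ i, P.shiftedParts r i = m + ∑ i : Fin r, (i : ℕ) := by
  simp only [shiftedParts, sum_add_distrib, sum_sortedParts hP]

theorem shiftedParts_injOn :
    Set.InjOn (fun P : m.Partition => P.shiftedParts r) {P | P.parts.card = r} := by
  intro P hP Q hQ h
  apply Nat.Partition.ext
  rw [← map_sortedParts hP, ← map_sortedParts hQ]
  congr 1
  funext i
  simpa [shiftedParts] using congrFun h i

theorem factorial_mul_card_le_card_positiveAntidiagonalTuple (m r : ℕ) :
    r ! * #{P : m.Partition | P.parts.card = r} ≤
      #(Finset.Nat.positiveAntidiagonalTuple r (m + ∑ i : Fin r, (i : ℕ))) := by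
  have hcard : #((univ.filter fun P : m.Partition => P.parts.card = r) ×ˢ
      (univ : Finset (Equiv.Perm (Fin r)))) = #{P : m.Partition | P.parts.card = r} * r ! := by
    rw [card_product, Finset.card_univ, Fintype.card_perm, Fintype.card_fin]
  rw [mul_comm, ← hcard]
  refine card_le_card_of_injOn (fun x => x.1.shiftedParts r ∘ x.2) ?_ ?_
  · rintro ⟨P, σ⟩ hP
    replace hP : P.parts.card = r := by simpa using hP
    rw [mem_coe, Finset.Nat.mem_positiveAntidiagonalTuple]
    exact ⟨(Equiv.sum_comp σ (P.shiftedParts r)).trans (sum_shiftedParts hP),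
      fun i => shiftedParts_pos hP (σ i)⟩
  · rintro ⟨P, σ⟩ hP ⟨Q, τ⟩ hQ h
    replace hP : P.parts.card = r := by simpa using hP
    replace hQ : Q.parts.card = r := by simpa using hQ
    obtain ⟨hPQ, rfl⟩ :=
      (strictMono_shiftedParts hP).eq_and_eq_of_comp_perm_eq (strictMono_shiftedParts hQ) h
    rw [shiftedParts_injOn hP hQ hPQ]

theorem card_mul_factorial_mul_factorial_le (m r : ℕ) :
    #{P : m.Partition | P.parts.card = r} * (r ! * (r - 1)!) ≤
      (m + ∑ i : Fin r, (i : ℕ) - 1) ^ (r - 1) := by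
  set N := m + ∑ i : Fin r, (i : ℕ)
  calc #{P : m.Partition | P.parts.card = r} * (r ! * (r - 1)!)
      = r ! * #{P : m.Partition | P.parts.card = r} * (r - 1)! := by ring
    _ ≤ (N - 1).choose (r - 1) * (r - 1)! := Nat.mul_le_mul_right _
        ((factorial_mul_card_le_card_positiveAntidiagonalTuple m r).trans
          (Finset.Nat.card_positiveAntidiagonalTuple_le r N))
    _ = (N - 1).descFactorial (r - 1) := by
        rw [Nat.descFactorial_eq_factorial_mul_choose, mul_comm]
    _ ≤ (N - 1) ^ (r - 1) := Nat.descFactorial_le_pow _ _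

end Nat.Partition

theorem Fin.sum_val_mul_two (r : ℕ) : (∑ i : Fin r, (i : ℕ)) * 2 = r * (r - 1) := by
  rw [Fin.sum_univ_eq_sum_range (fun i => i), sum_range_id_mul_two]

theorem partition_count_upper_bound'_general (m r : ℕ) :
    ((Finset.univ.filter fun P : Nat.Partition m => P.parts.card = r).card : ℝ) ≤
      ((m : ℝ) + (r : ℝ) ^ 2 / 2) ^ (r - 1) /
        ((Nat.factorial r : ℝ) * (Nat.factorial (r - 1) : ℝ)) := by
  set N := m + ∑ i : Fin r, (i : ℕ)
  have hN : (N - 1) * 2 ≤ m * 2 + r ^ 2 :=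
    calc (N - 1) * 2 ≤ N * 2 := Nat.mul_le_mul_right _ (Nat.sub_le N 1)
      _ = m * 2 + r * (r - 1) := by rw [add_mul, Fin.sum_val_mul_two]
      _ ≤ m * 2 + r ^ 2 := by rw [sq]; gcongr; exact Nat.sub_le r 1
  have hN' : ((N - 1 : ℕ) : ℝ) ≤ m + r ^ 2 / 2 := by
    have : ((N - 1 : ℕ) : ℝ) * 2 ≤ m * 2 + r ^ 2 := by exact_mod_cast hN
    linarith
  rw [le_div_iff₀ (by positivity)]
  calc _ ≤ ((N - 1 : ℕ) : ℝ) ^ (r - 1) := by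
        exact_mod_cast Nat.Partition.card_mul_factorial_mul_factorial_le m r
    _ ≤ _ := pow_le_pow_left₀ (Nat.cast_nonneg _) hN' _

/-- The number of partitions of `m` into exactly `r` parts is at most
`(m + r²/2)^{r-1} / (r!(r-1)!)`. -/
theorem partition_count_upper_bound' (m r : ℕ) (hr : 1 ≤ r) :
    ((Finset.univ.filter fun P : Nat.Partition m => P.parts.card = r).card : ℝ) ≤
      ((m : ℝ) + (r : ℝ) ^ 2 / 2) ^ (r - 1) /
        ((Nat.factorial r : ℝ) * (Nat.factorial (r - 1) : ℝ)) :=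
  partition_count_upper_bound'_general m r
end

section
/- If a Wilf partition of n is a fixed point of the part-multiplicity interchange involution, then n ≡ k (mod 2), where k is the sum of p^2 over the part-multiplicity pairs (p,p) with equal part and multiplicity; equivalently, n - k is even. -/
/-!
Swapping coordinates pairs each off-diagonal part `(p, m)` of a fixed point with a distinct part
`(m, p)` contributing the same `p * m` to `n`, so the off-diagonal contribution to `n` is even
and `n` differs from the diagonal contribution `k = ∑ p²` by an even number.
-/

/-- `S` is (the part-multiplicity representation of) a Wilf partition of `n`:
a finite set of pairs `(p, m)` of positive integers with all first coordinates
distinct and all second coordinates distinct, and `∑ p·m = n`. -/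
def IsWilfPartition (n : ℕ) (S : Finset (ℕ × ℕ)) : Prop :=
  (∀ q ∈ S, 0 < q.1 ∧ 0 < q.2) ∧
  (∀ q ∈ S, ∀ q' ∈ S, q.1 = q'.1 → q = q') ∧
  (∀ q ∈ S, ∀ q' ∈ S, q.2 = q'.2 → q = q') ∧
  ∑ q ∈ S, q.1 * q.2 = n

/-- `S` is a fixed point of the part-multiplicity interchange involution. -/
def IsFixedWilf (S : Finset (ℕ × ℕ)) : Prop :=
  ∀ q ∈ S, (q.2, q.1) ∈ S

theorem Finset.even_sum_offDiag_of_swap_mem {α : Type*} [DecidableEq α] (S : Finset (α × α))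
    (hS : ∀ q ∈ S, q.swap ∈ S) (f : α × α → ℕ) (hf : ∀ q, f q.swap = f q) :
    Even (∑ q ∈ S.filter (fun q => ¬ q.1 = q.2), f q) := by
  rw [even_iff_two_dvd, ← ZMod.natCast_eq_zero_iff, Nat.cast_sum]
  refine Finset.sum_involution (fun q _ => q.swap) (fun q _ => ?_) (fun q hq _ => ?_)
    (fun q hq => ?_) (fun q _ => Prod.swap_swap q)
  · rw [hf, CharTwo.add_self_eq_zero]
  · exact fun h => (Finset.mem_filter.1 hq).2 (congrArg Prod.snd h)
  · obtain ⟨hqS, hne⟩ := Finset.mem_filter.1 hq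
    exact Finset.mem_filter.2 ⟨hS q hqS, Ne.symm hne⟩

theorem Finset.sum_diag_mul_eq_sum_sq (S : Finset (ℕ × ℕ)) :
    ∑ q ∈ S.filter (fun q => q.1 = q.2), q.1 * q.2 =
      ∑ q ∈ S.filter (fun q => q.1 = q.2), q.1 ^ 2 :=
  Finset.sum_congr rfl fun q hq => by rw [sq, (Finset.mem_filter.1 hq).2]

/-- For a fixed-point Wilf partition of `n`, if `k` is the sum of `p²` over the
diagonal pairs `(p,p)`, then `n ≡ k (mod 2)`; equivalently `n - k` is even. -/
theorem wilf_fixed_point_parity (n : ℕ) (S : Finset (ℕ × ℕ))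
    (hS : IsWilfPartition n S) (hfix : IsFixedWilf S) (k : ℕ)
    (hk : k = ∑ q ∈ S.filter (fun q => q.1 = q.2), q.1 ^ 2) :
    n % 2 = k % 2 ∧ k ≤ n ∧ Even (n - k) := by
  have hsplit : k + ∑ q ∈ S.filter (fun q => ¬ q.1 = q.2), q.1 * q.2 = n := by
    rw [hk, ← Finset.sum_diag_mul_eq_sum_sq, Finset.sum_filter_add_sum_filter_not]
    exact hS.2.2.2
  obtain ⟨m, hm⟩ := S.even_sum_offDiag_of_swap_mem hfix (fun q => q.1 * q.2)
    (fun q => Nat.mul_comm _ _)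
  exact ⟨by omega, by omega, m, by omega⟩
end

section
/- Every fixed-point Wilf partition of n decomposes uniquely as: a set of diagonal pairs (p,p), contributing a partition of some k ≤ n into distinct squares, together with pairs of off-diagonal pairs {(p,m),(m,p)} with p ≠ m, whose contribution 2pm sums to n - k; in particular n - k is even. -/
open Finset

theorem Finset.sum_eq_two_nsmul_sum_filter_snd_lt_fst {α M : Type*} [LinearOrder α]
    [AddCommMonoid M] (T : Finset (α × α)) (f : α × α → M)
    (hswap : ∀ q ∈ T, q.swap ∈ T) (hoff : ∀ q ∈ T, q.1 ≠ q.2) (hf : ∀ q, f q.swap = f q) :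
    ∑ q ∈ T, f q = 2 • ∑ q ∈ T.filter (fun q => q.2 < q.1), f q := by
  have hlt : T.filter (fun q => ¬ q.2 < q.1) = T.filter (fun q => q.1 < q.2) :=
    filter_congr fun q hq => by
      rw [not_lt]
      exact ⟨fun h => lt_of_le_of_ne h (hoff q hq), le_of_lt⟩
  have hswap_sum : ∑ q ∈ T.filter (fun q => q.1 < q.2), f q
      = ∑ q ∈ T.filter (fun q => q.2 < q.1), f q :=
    sum_nbij' Prod.swap Prod.swap
      (fun q hq => mem_filter.2 ⟨hswap q (mem_filter.1 hq).1, (mem_filter.1 hq).2⟩)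
      (fun q hq => mem_filter.2 ⟨hswap q (mem_filter.1 hq).1, (mem_filter.1 hq).2⟩)
      (fun _ _ => rfl) (fun _ _ => rfl) (fun q _ => (hf q).symm)
  rw [← sum_filter_add_sum_filter_not T (fun q => q.2 < q.1), hlt, hswap_sum, two_nsmul]

theorem IsFixedWilf.mem_sdiff_filter_diag {S : Finset (ℕ × ℕ)} (hfix : IsFixedWilf S)
    {q : ℕ × ℕ} (hq : q ∈ S \ S.filter (fun q => q.1 = q.2)) :
    q.1 ≠ q.2 ∧ (q.2, q.1) ∈ S \ S.filter (fun q => q.1 = q.2) := by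
  simp only [mem_sdiff, mem_filter, not_and] at hq ⊢
  exact ⟨hq.2 hq.1, hfix q hq.1, fun _ h => hq.2 hq.1 h.symm⟩

/-- Every fixed-point Wilf partition of `n` decomposes as: the diagonal pairs
`(p,p)`, giving a partition of some `k ≤ n` into distinct squares, together with
pairs of off-diagonal pairs `{(p,m),(m,p)}` with `p ≠ m`, whose contribution
`2pm` sums to `n - k`; in particular `n - k` is even. -/
theorem wilf_fixed_point_decomposition (n : ℕ) (S : Finset (ℕ × ℕ))
    (hS : IsWilfPartition n S) (hfix : IsFixedWilf S)
    (D : Finset (ℕ × ℕ)) (hD : D = S.filter (fun q => q.1 = q.2)) (k : ℕ)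
    (hk : k = ∑ q ∈ D, q.1 * q.2) :
    k ≤ n ∧ Even (n - k) ∧
      -- the diagonal part is a partition of `k` into distinct squares
      (∑ q ∈ D, q.1 ^ 2 = k ∧ ∀ q ∈ D, ∀ q' ∈ D, q.1 = q'.1 → q = q') ∧
      -- the off-diagonal pairs come in swapped couples `{(p,m),(m,p)}`, `p ≠ m`
      (∀ q ∈ S \ D, q.1 ≠ q.2 ∧ (q.2, q.1) ∈ S \ D) ∧
      -- each couple contributes `2pm`, and these contributions sum to `n - k`
      2 * ∑ q ∈ (S \ D).filter (fun q => q.2 < q.1), q.1 * q.2 = n - k := by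
  obtain ⟨-, hfst, -, hsum⟩ := hS
  have hDS : D ⊆ S := hD ▸ filter_subset _ _
  have hoff : ∀ q ∈ S \ D, q.1 ≠ q.2 ∧ (q.2, q.1) ∈ S \ D := fun q hq => by
    subst hD; exact hfix.mem_sdiff_filter_diag hq
  have hsplit : ∑ q ∈ S \ D, q.1 * q.2 + k = n := hk ▸ hsum ▸ sum_sdiff hDS
  have hcouples := sum_eq_two_nsmul_sum_filter_snd_lt_fst (S \ D) (fun q => q.1 * q.2)
    (fun q hq => (hoff q hq).2) (fun q hq => (hoff q hq).1) (fun q => mul_comm q.2 q.1)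
  have htwice : 2 * ∑ q ∈ (S \ D).filter (fun q => q.2 < q.1), q.1 * q.2 = n - k := by
    rw [smul_eq_mul] at hcouples
    omega
  refine ⟨by omega, even_iff_two_dvd.2 ⟨_, htwice.symm⟩,
    ⟨?_, fun q hq q' hq' => hfst q (hDS hq) q' (hDS hq')⟩, hoff, htwice⟩
  subst hD hk
  exact sum_congr rfl fun q hq => by rw [sq, (mem_filter.1 hq).2]
end

section
/- Every positive integer n ∉ {2,3,7,11,15} has a Wilf partition that is a fixed point of the part-multiplicity involution. -/
theorem Set.InjOn.union_of_ne {α β : Type*} {f : α → β} {s t : Set α} (hs : Set.InjOn f s)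
    (ht : Set.InjOn f t) (hst : ∀ x ∈ s, ∀ y ∈ t, f x ≠ f y) : Set.InjOn f (s ∪ t) :=
  (Set.injOn_union (Set.disjoint_left.2 fun x hxs hxt => hst x hxs x hxt rfl)).2 ⟨hs, ht, hst⟩

theorem isWilfPartition_singleton {p m : ℕ} (hp : 0 < p) (hm : 0 < m) :
    IsWilfPartition (p * m) {(p, m)} := by
  refine ⟨?_, ?_, ?_, Finset.sum_singleton _ _⟩ <;> simp [hp, hm]

theorem IsWilfPartition.union {n m : ℕ} {S T : Finset (ℕ × ℕ)}
    (hS : IsWilfPartition n S) (hT : IsWilfPartition m T)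
    (h₁ : ∀ q ∈ S, ∀ q' ∈ T, q.1 ≠ q'.1) (h₂ : ∀ q ∈ S, ∀ q' ∈ T, q.2 ≠ q'.2) :
    IsWilfPartition (n + m) (S ∪ T) := by
  obtain ⟨hSpos, hS₁, hS₂, hSsum⟩ := hS
  obtain ⟨hTpos, hT₁, hT₂, hTsum⟩ := hT
  have hdisj : Disjoint S T :=
    Finset.disjoint_left.2 fun q hqS hqT => h₁ q hqS q hqT rfl
  refine ⟨fun q hq => ?_, fun q hq q' hq' => ?_, fun q hq q' hq' => ?_, ?_⟩
  · rcases Finset.mem_union.1 hq with hq | hq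
    exacts [hSpos q hq, hTpos q hq]
  · exact Set.InjOn.union_of_ne (f := Prod.fst) hS₁ hT₁ h₁ (Finset.mem_union.1 hq)
      (Finset.mem_union.1 hq')
  · exact Set.InjOn.union_of_ne (f := Prod.snd) hS₂ hT₂ h₂ (Finset.mem_union.1 hq)
      (Finset.mem_union.1 hq')
  · rw [Finset.sum_union hdisj, hSsum, hTsum]

theorem IsFixedWilf.union {S T : Finset (ℕ × ℕ)} (hS : IsFixedWilf S) (hT : IsFixedWilf T) :
    IsFixedWilf (S ∪ T) := by
  intro q hq
  rcases Finset.mem_union.1 hq with hq | hq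
  exacts [Finset.mem_union_left _ (hS q hq), Finset.mem_union_right _ (hT q hq)]

theorem isFixedWilf_singleton (a : ℕ) : IsFixedWilf {(a, a)} := by
  simp [IsFixedWilf]

theorem isFixedWilf_swapPair (b c : ℕ) : IsFixedWilf {(b, c), (c, b)} := by
  simp [IsFixedWilf]

theorem isWilfPartition_swapPair {b c : ℕ} (hb : 0 < b) (hc : 0 < c) (hbc : b ≠ c) :
    IsWilfPartition (2 * (b * c)) {(b, c), (c, b)} := by
  rw [Finset.insert_eq]
  convert (isWilfPartition_singleton hb hc).union (isWilfPartition_singleton hc hb)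
    (by simpa using hbc) (by simpa using hbc.symm) using 1
  ring

theorem isWilfPartition_diag_swapPair {a b c : ℕ} (ha : 0 < a) (hb : 0 < b) (hc : 0 < c)
    (hab : a ≠ b) (hac : a ≠ c) (hbc : b ≠ c) :
    IsWilfPartition (a * a + 2 * (b * c)) ({(a, a)} ∪ {(b, c), (c, b)}) :=
  (isWilfPartition_singleton ha ha).union (isWilfPartition_swapPair hb hc hbc)
    (by simp [hab, hac]) (by simp [hab, hac])

/-- Every positive integer `n ∉ {2,3,7,11,15}` has a fixed-point Wilf partition. -/
theorem fixed_wilf_exists (n : ℕ) (hpos : 0 < n)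
    (hex : n ∉ ({2, 3, 7, 11, 15} : Finset ℕ)) :
    ∃ S : Finset (ℕ × ℕ), IsWilfPartition n S ∧ IsFixedWilf S := by
  simp only [Finset.mem_insert, Finset.mem_singleton, not_or] at hex
  obtain ⟨h2, h3, h7, h11, h15⟩ := hex
  have hcases : n % 2 = 0 ∨ n = 1 ∨ n = 5 ∨ n = 9 ∨ (n % 4 = 1 ∧ 13 ≤ n) ∨
      (n % 4 = 3 ∧ 19 ≤ n) := by omega
  rcases hcases with heven | rfl | rfl | rfl | ⟨hmod, hge⟩ | ⟨hmod, hge⟩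
  · refine ⟨_, ?_, isFixedWilf_swapPair 1 (n / 2)⟩
    convert isWilfPartition_swapPair one_pos (by omega : 0 < n / 2) (by omega) using 1
    omega
  · exact ⟨_, isWilfPartition_singleton one_pos one_pos, isFixedWilf_singleton 1⟩
  · exact ⟨_, (isWilfPartition_singleton one_pos one_pos).union
      (isWilfPartition_singleton two_pos two_pos) (by simp) (by simp),
      (isFixedWilf_singleton 1).union (isFixedWilf_singleton 2)⟩
  · exact ⟨_, isWilfPartition_singleton three_pos three_pos, isFixedWilf_singleton 3⟩
  · refine ⟨_, ?_, (isFixedWilf_singleton 1).union (isFixedWilf_swapPair 2 ((n - 1) / 4))⟩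
    convert isWilfPartition_diag_swapPair one_pos two_pos (by omega : 0 < (n - 1) / 4)
      (by omega) (by omega) (by omega) using 1
    omega
  · refine ⟨_, ?_, (isFixedWilf_singleton 3).union (isFixedWilf_swapPair 1 ((n - 9) / 2))⟩
    convert isWilfPartition_diag_swapPair three_pos one_pos (by omega : 0 < (n - 9) / 2)
      (by omega) (by omega) (by omega) using 1
    omega
end

section
/- For any fixed K ≥ 1 and R ≥ 1, given 2RK distinct positive integers x_1 < x_2 < ... < x_{2RK}, and any K permutations σ_1,...,σ_K of {1,...,R}, the set of pairs {(x_{(i-1)R+j}, x_{(2K-i)R+σ_i(j)}) : 1 ≤ i ≤ K, 1 ≤ j ≤ R} ∪ {(x_{(2K-i)R+σ_i(j)}, x_{(i-1)R+j}) : 1 ≤ i ≤ K, 1 ≤ j ≤ R} has distinct first coordinates and distinct second coordinates, and is invariant under swapping coordinates; hence it is a fixed-point Wilf partition of its total weight. -/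
/-!
Cut `1, …, 2KR` into `2K` blocks of length `R`. The pairs match slot `j` of block `i ≤ K` with
slot `σ i j` of the mirror block `2K + 1 - i`. Both index maps are injective and their ranges lie
in different halves, so, `x` being injective, no two pairs share a first coordinate. Adding the
swapped pairs makes the set symmetric, and symmetry turns distinct first coordinates into distinct
second coordinates.
-/

open Finset

def swapClosure {α β : Type*} [DecidableEq β] (D : Finset α) (f g : α → β) : Finset (β × β) :=
  D.image (fun d => (f d, g d)) ∪ D.image (fun d => (g d, f d))

section SwapClosure

variable {α β : Type*} [DecidableEq β] {D : Finset α} {f g : α → β}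

theorem swap_mem_swapClosure {q : β × β} (hq : q ∈ swapClosure D f g) :
    q.swap ∈ swapClosure D f g := by
  simp only [swapClosure, mem_union, mem_image] at hq ⊢
  rcases hq with ⟨d, hd, rfl⟩ | ⟨d, hd, rfl⟩
  · exact Or.inr ⟨d, hd, rfl⟩
  · exact Or.inl ⟨d, hd, rfl⟩

theorem injOn_fst_swapClosure (hf : Set.InjOn f D) (hg : Set.InjOn g D)
    (hfg : ∀ d ∈ D, ∀ d' ∈ D, f d ≠ g d') :
    Set.InjOn Prod.fst (swapClosure D f g : Set (β × β)) := by
  simp only [Set.InjOn, swapClosure, coe_union, coe_image, Set.mem_union, Set.mem_image,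
    mem_coe]
  rintro _ (⟨d, hd, rfl⟩ | ⟨d, hd, rfl⟩) _ (⟨d', hd', rfl⟩ | ⟨d', hd', rfl⟩) h
  · rw [hf hd hd' h]
  · exact absurd h (hfg d hd d' hd')
  · exact absurd h.symm (hfg d' hd' d hd)
  · rw [hg hd hd' h]

theorem injOn_snd_swapClosure (hf : Set.InjOn f D) (hg : Set.InjOn g D)
    (hfg : ∀ d ∈ D, ∀ d' ∈ D, f d ≠ g d') :
    Set.InjOn Prod.snd (swapClosure D f g : Set (β × β)) := fun _ hq _ hq' h =>
  Prod.swap_injective <|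
    injOn_fst_swapClosure hf hg hfg (swap_mem_swapClosure hq) (swap_mem_swapClosure hq') h

end SwapClosure

theorem isWilfPartition_swapClosure {α : Type*} {D : Finset α} {f g : α → ℕ}
    (hf : Set.InjOn f D) (hg : Set.InjOn g D) (hfg : ∀ d ∈ D, ∀ d' ∈ D, f d ≠ g d')
    (hfpos : ∀ d ∈ D, 0 < f d) (hgpos : ∀ d ∈ D, 0 < g d) :
    IsWilfPartition (∑ q ∈ swapClosure D f g, q.1 * q.2) (swapClosure D f g) ∧
      IsFixedWilf (swapClosure D f g) := by
  refine ⟨⟨?_, injOn_fst_swapClosure hf hg hfg, injOn_snd_swapClosure hf hg hfg, rfl⟩,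
    fun _ => swap_mem_swapClosure⟩
  simp only [swapClosure, mem_union, mem_image]
  rintro _ (⟨d, hd, rfl⟩ | ⟨d, hd, rfl⟩)
  exacts [⟨hfpos d hd, hgpos d hd⟩, ⟨hgpos d hd, hfpos d hd⟩]

theorem Nat.eq_and_eq_of_mul_add_eq_mul_add {R i j i' j' : ℕ} (hj : j ∈ Set.Icc 1 R)
    (hj' : j' ∈ Set.Icc 1 R) (h : i * R + j = i' * R + j') : i = i' ∧ j = j' := by
  have hR : 0 < R := hj.1.trans hj.2
  -- slots are numbered from `1`, so the remainder of `a * R + b - 1` is `b - 1`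
  have hdivmod {a b : ℕ} (hb : b ∈ Set.Icc 1 R) :
      (a * R + b - 1) / R = a ∧ (a * R + b - 1) % R = b - 1 :=
    (Nat.div_mod_unique hR).2 ⟨by rw [Nat.mul_comm]; have := hb.1; omega, by have := hb.2; omega⟩
  obtain ⟨hdiv, hmod⟩ := hdivmod (a := i) hj
  obtain ⟨hdiv', hmod'⟩ := hdivmod (a := i') hj'
  rw [h] at hdiv hmod
  have := hj.1
  have := hj'.1
  omega

section Indices

variable {K R : ℕ} {σ : ℕ → ℕ → ℕ}

def lowIndex (R : ℕ) (ij : ℕ × ℕ) : ℕ := (ij.1 - 1) * R + ij.2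

def highIndex (K R : ℕ) (σ : ℕ → ℕ → ℕ) (ij : ℕ × ℕ) : ℕ := (2 * K - ij.1) * R + σ ij.1 ij.2

theorem lowIndex_mem_Icc {ij : ℕ × ℕ} (hij : ij ∈ Icc 1 K ×ˢ Icc 1 R) :
    lowIndex R ij ∈ Set.Icc 1 (K * R) := by
  obtain ⟨i, j⟩ := ij
  simp only [mem_product, mem_Icc] at hij
  have : (i - 1 + 1) * R ≤ K * R := Nat.mul_le_mul_right R (by omega)
  rw [Nat.succ_mul] at this
  exact ⟨by dsimp only [lowIndex]; omega, by dsimp only [lowIndex]; omega⟩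

theorem injOn_lowIndex : Set.InjOn (lowIndex R) (Icc 1 K ×ˢ Icc 1 R : Finset (ℕ × ℕ)) := by
  rintro ⟨i, j⟩ hij ⟨i', j'⟩ hij' h
  simp only [coe_product, coe_Icc, Set.mem_prod, Set.mem_Icc] at hij hij'
  obtain ⟨hi, rfl⟩ := Nat.eq_and_eq_of_mul_add_eq_mul_add hij.2 hij'.2 h
  rw [show i = i' by omega]

theorem highIndex_mem_Icc
    (hσ : ∀ i, 1 ≤ i → i ≤ K → Set.MapsTo (σ i) (Set.Icc 1 R) (Set.Icc 1 R))
    {ij : ℕ × ℕ} (hij : ij ∈ Icc 1 K ×ˢ Icc 1 R) :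
    highIndex K R σ ij ∈ Set.Icc (K * R + 1) (2 * (K * R)) := by
  obtain ⟨i, j⟩ := ij
  simp only [mem_product, mem_Icc] at hij
  obtain ⟨hσ1, hσR⟩ := hσ i hij.1.1 hij.1.2 ⟨hij.2.1, hij.2.2⟩
  have hlow : K * R ≤ (2 * K - i) * R := Nat.mul_le_mul_right R (by omega)
  have hhigh : (2 * K - i + 1) * R ≤ 2 * K * R := Nat.mul_le_mul_right R (by omega)
  rw [Nat.succ_mul, Nat.mul_assoc] at hhigh
  exact ⟨by dsimp only [highIndex]; omega, by dsimp only [highIndex]; omega⟩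

theorem injOn_highIndex
    (hσ : ∀ i, 1 ≤ i → i ≤ K → Set.BijOn (σ i) (Set.Icc 1 R) (Set.Icc 1 R)) :
    Set.InjOn (highIndex K R σ) (Icc 1 K ×ˢ Icc 1 R : Finset (ℕ × ℕ)) := by
  rintro ⟨i, j⟩ hij ⟨i', j'⟩ hij' h
  simp only [coe_product, coe_Icc, Set.mem_prod, Set.mem_Icc] at hij hij'
  have hσi := hσ i hij.1.1 hij.1.2
  obtain ⟨hi, hσj⟩ := Nat.eq_and_eq_of_mul_add_eq_mul_add (hσi.mapsTo hij.2)
    ((hσ i' hij'.1.1 hij'.1.2).mapsTo hij'.2) h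
  obtain rfl : i = i' := by omega
  rw [hσi.injOn hij.2 hij'.2 hσj]

end Indices

theorem fixed_wilf_construction_general (K R : ℕ)
    (x : ℕ → ℕ) (hxpos : ∀ i, 1 ≤ i → i ≤ 2 * R * K → 0 < x i)
    (hxmono : ∀ i j, 1 ≤ i → i < j → j ≤ 2 * R * K → x i < x j)
    (σ : ℕ → ℕ → ℕ)
    (hσ : ∀ i, 1 ≤ i → i ≤ K → Set.BijOn (σ i) (Set.Icc 1 R) (Set.Icc 1 R))
    (S : Finset (ℕ × ℕ))
    (hS : S = ((Finset.Icc 1 K ×ˢ Finset.Icc 1 R).image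
          (fun ij => (x ((ij.1 - 1) * R + ij.2), x ((2 * K - ij.1) * R + σ ij.1 ij.2))))
        ∪ ((Finset.Icc 1 K ×ˢ Finset.Icc 1 R).image
          (fun ij => (x ((2 * K - ij.1) * R + σ ij.1 ij.2), x ((ij.1 - 1) * R + ij.2))))) :
    IsWilfPartition (∑ q ∈ S, q.1 * q.2) S ∧ IsFixedWilf S := by
  set D := Icc 1 K ×ˢ Icc 1 R
  rw [show 2 * R * K = 2 * (K * R) by ring] at hxpos hxmono
  have hx : Set.InjOn x (Set.Icc 1 (2 * (K * R))) :=
    StrictMonoOn.injOn fun i hi j hj hij => hxmono i j hi.1 hij hj.2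
  have hmaps : ∀ i, 1 ≤ i → i ≤ K → Set.MapsTo (σ i) (Set.Icc 1 R) (Set.Icc 1 R) :=
    fun i hi hiK => (hσ i hi hiK).mapsTo
  have hlow {d} (hd : d ∈ D) : lowIndex R d ∈ Set.Icc 1 (2 * (K * R)) :=
    Set.Icc_subset_Icc_right (by omega) (lowIndex_mem_Icc hd)
  have hhigh {d} (hd : d ∈ D) : highIndex K R σ d ∈ Set.Icc 1 (2 * (K * R)) :=
    Set.Icc_subset_Icc_left (by omega) (highIndex_mem_Icc hmaps hd)
  have hdisj : ∀ d ∈ D, ∀ d' ∈ D, lowIndex R d ≠ highIndex K R σ d' := fun d hd d' hd' =>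
    ((Nat.lt_succ_of_le (lowIndex_mem_Icc hd).2).trans_le (highIndex_mem_Icc hmaps hd').1).ne
  subst hS
  exact isWilfPartition_swapClosure (f := x ∘ lowIndex R) (g := x ∘ highIndex K R σ)
    (hx.comp injOn_lowIndex fun _ => hlow) (hx.comp (injOn_highIndex hσ) fun _ => hhigh)
    (fun d hd d' hd' h => hdisj d hd d' hd' (hx (hlow hd) (hhigh hd') h))
    (fun d hd => hxpos _ (hlow hd).1 (hlow hd).2) (fun d hd => hxpos _ (hhigh hd).1 (hhigh hd).2)

/-- Given `2RK` distinct positive integers `x 1 < ⋯ < x (2RK)` and `K`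
permutations `σ 1, …, σ K` of `{1,…,R}`, the set of pairs
`(x ((i-1)R+j), x ((2K-i)R+σ i j))` for `1 ≤ i ≤ K`, `1 ≤ j ≤ R`, together with
their swaps, has distinct first coordinates and distinct second coordinates and
is invariant under swapping; hence it is a fixed-point Wilf partition of its
total weight. -/
theorem fixed_wilf_construction (K R : ℕ) (hK : 1 ≤ K) (hR : 1 ≤ R)
    (x : ℕ → ℕ) (hxpos : ∀ i, 1 ≤ i → i ≤ 2 * R * K → 0 < x i)
    (hxmono : ∀ i j, 1 ≤ i → i < j → j ≤ 2 * R * K → x i < x j)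
    (σ : ℕ → ℕ → ℕ)
    (hσ : ∀ i, 1 ≤ i → i ≤ K → Set.BijOn (σ i) (Set.Icc 1 R) (Set.Icc 1 R))
    (S : Finset (ℕ × ℕ))
    (hS : S = ((Finset.Icc 1 K ×ˢ Finset.Icc 1 R).image
          (fun ij => (x ((ij.1 - 1) * R + ij.2), x ((2 * K - ij.1) * R + σ ij.1 ij.2))))
        ∪ ((Finset.Icc 1 K ×ˢ Finset.Icc 1 R).image
          (fun ij => (x ((2 * K - ij.1) * R + σ ij.1 ij.2), x ((ij.1 - 1) * R + ij.2))))) :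
    IsWilfPartition (∑ q ∈ S, q.1 * q.2) S ∧ IsFixedWilf S :=
  fixed_wilf_construction_general K R x hxpos hxmono σ hσ S hS
end

section
/- Let F(n) be the number of fixed points of the part-multiplicity involution on Wilf partitions of n. Then log F(n) ≥ (1/6)(6n)^{1/3} log n · (1 + o(1)) as n → ∞. -/
/-- The number of fixed points of the part-multiplicity involution on
Wilf partitions of `n`. -/
noncomputable def wilfFixedCount (n : ℕ) : ℕ :=
  Nat.card {S : Finset (ℕ × ℕ) // IsWilfPartition n S ∧ IsFixedWilf S}

/-!
A fixed point of the involution is the graph `{(v, f v)}` of an involution `f` of a finite set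
`V` of positive integers with `∑ v * f v = n`. Take `V = {1, r} ∪ [3, 2m + 2]`, plus the fixed
point `2m + 3` when `n` is odd, pair `i + 3` with `2m + 2 - τ i` for a permutation `τ` of
`[0, m)`, and let `r`, the partner of `1`, absorb the rest of `n`. This works as long as the
weight `∑ (i + 3) (2m + 2 - τ i)` stays below about `n / 2`. It is `≈ 2m³/3` for `τ = id`,
and remains `2m³/3 + O(w m²)` when `τ` only permutes inside consecutive blocks of width `w`. So
`m ≈ (3n/4)^{1/3}` admits `(w!)^{m/w}` distinct partitions, and with `w ≈ m / log² n`,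
`log (w!)^{m/w} ≈ m log w ≈ (3n/4)^{1/3} (log n) / 3 = (1/6) (6n)^{1/3} log n`.
-/

open Filter Real Finset Equiv
open scoped Nat Topology

namespace WilfFixed

theorem exists_tendsto_zero_mul_le {f g ψ : ℕ → ℝ} (hf : ∀ n, 0 ≤ f n)
    (hψ : Tendsto ψ atTop (𝓝 1)) (h : ∀ᶠ n in atTop, ψ n * g n ≤ f n) :
    ∃ e : ℕ → ℝ, Tendsto e atTop (𝓝 0) ∧ ∀ n, f n ≥ g n * (1 + e n) := by
  refine ⟨fun n => if 0 < g n then min 0 (f n / g n - 1) else 0, ?_, fun n => ?_⟩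
  · have hlow : Tendsto (fun n => min 0 (ψ n - 1)) atTop (𝓝 0) := by
      simpa using (tendsto_const_nhds (x := (0 : ℝ))).min (hψ.sub_const 1)
    refine tendsto_of_tendsto_of_tendsto_of_le_of_le' hlow tendsto_const_nhds ?_
      (Eventually.of_forall fun n => ?_)
    · filter_upwards [h] with n hn
      split_ifs with hg
      · exact min_le_min le_rfl (sub_le_sub_right ((le_div_iff₀ hg).2 hn) 1)
      · exact min_le_left _ _
    · split_ifs
      exacts [min_le_left _ _, le_rfl]
  · dsimp only
    split_ifs with hg
    · have := mul_le_mul_of_nonneg_left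
        (by linarith [min_le_right 0 (f n / g n - 1)] : 1 + min 0 (f n / g n - 1) ≤ f n / g n)
        hg.le
      rwa [mul_div_cancel₀ _ hg.ne'] at this
    · linarith [hf n, not_lt.1 hg]

theorem isWilfPartition_graph {V : Finset ℕ} {f : ℕ → ℕ} (hpos : ∀ v ∈ V, 0 < v)
    (hmaps : ∀ v ∈ V, f v ∈ V) (hinv : ∀ v ∈ V, f (f v) = v) :
    IsWilfPartition (∑ v ∈ V, v * f v) (V.image fun v => (v, f v)) ∧
      IsFixedWilf (V.image fun v => (v, f v)) := by
  simp only [IsWilfPartition, IsFixedWilf, mem_image, forall_exists_index, and_imp,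
    forall_apply_eq_imp_iff₂, Prod.mk.injEq]
  refine ⟨⟨fun v hv => ⟨hpos v hv, hpos _ (hmaps v hv)⟩,
    fun v _ v' _ h => ⟨h, h ▸ rfl⟩,
    fun v hv v' hv' h => ?_, sum_image fun v _ v' _ h => congrArg Prod.fst h⟩,
    fun v hv => ⟨f v, hmaps v hv, rfl, hinv v hv⟩⟩
  have : v = v' := by rw [← hinv v hv, ← hinv v' hv', h]
  exact ⟨this, h⟩

theorem finite_fixedWilf (n : ℕ) :
    Finite {S : Finset (ℕ × ℕ) // IsWilfPartition n S ∧ IsFixedWilf S} := by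
  refine Set.Finite.subset ((Icc 1 n ×ˢ Icc 1 n).powerset.finite_toSet) ?_
  rintro S ⟨⟨hpos, -, -, hsum⟩, -⟩
  simp only [mem_coe, mem_powerset]
  intro q hq
  have hq_le : q.1 * q.2 ≤ n := hsum ▸ single_le_sum (f := fun q : ℕ × ℕ => q.1 * q.2)
    (fun _ _ => Nat.zero_le _) hq
  obtain ⟨h1, h2⟩ := hpos q hq
  simp only [mem_product, mem_Icc]
  exact ⟨⟨h1, (Nat.le_mul_of_pos_right _ h2).trans hq_le⟩,
    ⟨h2, (Nat.le_mul_of_pos_left _ h1).trans hq_le⟩⟩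

theorem card_le_wilfFixedCount {α : Type*} {n : ℕ} {f : α → Finset (ℕ × ℕ)}
    (hf : Function.Injective f) (hS : ∀ a, IsWilfPartition n (f a) ∧ IsFixedWilf (f a)) :
    Nat.card α ≤ wilfFixedCount n :=
  have := finite_fixedWilf n
  Nat.card_le_card_of_injective (fun a => ⟨f a, hS a⟩) fun _ _ h => hf (congrArg Subtype.val h)

section BlockPerm

variable {w K : ℕ} [NeZero w]

-- Acts as `σ t` on the block `[t * w, t * w + w)` for each `t < K` and fixes all larger numbers.
def blockPerm (σ : Fin K → Perm (Fin w)) : Perm ℕ :=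
  (Nat.divModEquiv w).symm.permCongr
    (prodShear (Equiv.refl ℕ) fun t => if h : t < K then σ ⟨t, h⟩ else 1)

variable (σ : Fin K → Perm (Fin w))

theorem blockPerm_mul_add (t : Fin K) (s : Fin w) :
    blockPerm σ (t * w + s) = t * w + σ t s := by
  have hx : (t : ℕ) * w + s = (Nat.divModEquiv w).symm (t, s) := rfl
  rw [hx, blockPerm, permCongr_apply, symm_symm, apply_symm_apply]
  simp

theorem blockPerm_div (i : ℕ) : blockPerm σ i / w = i / w := by
  simp only [blockPerm, permCongr_apply, symm_symm, Nat.divModEquiv_symm_apply]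
  rw [add_comm, Nat.add_mul_div_right _ _ (NeZero.pos w), Nat.div_eq_of_lt (Fin.is_lt _),
    zero_add]
  rfl

theorem blockPerm_lt_iff {i : ℕ} : blockPerm σ i < K * w ↔ i < K * w := by
  simp only [← Nat.div_lt_iff_lt_mul (NeZero.pos w), blockPerm_div]

theorem lt_blockPerm_add (i : ℕ) : i < blockPerm σ i + w := by
  have h1 := Nat.lt_div_mul_add (a := i) (NeZero.pos w)
  have h2 := Nat.div_mul_le_self (blockPerm σ i) w
  rw [blockPerm_div] at h2
  omega

theorem eq_of_blockPerm_eqOn {σ σ' : Fin K → Perm (Fin w)}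
    (h : ∀ i < K * w, blockPerm σ i = blockPerm σ' i) : σ = σ' := by
  funext t
  ext s
  have ht : t * w + s < K * w := by nlinarith [t.2, s.2]
  have := h _ ht
  rw [blockPerm_mul_add, blockPerm_mul_add] at this
  omega

end BlockPerm

section Pairing

variable (m r : ℕ) (τ : Perm ℕ)

def pairing (v : ℕ) : ℕ :=
  if v = 1 then r
  else if v = r then 1
  else if 3 ≤ v ∧ v < m + 3 then 2 * m + 2 - τ (v - 3)
  else if m + 3 ≤ v ∧ v < 2 * m + 3 then τ.symm (2 * m + 2 - v) + 3
  else v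

def pairingSupport (p : Prop) [Decidable p] : Finset ℕ :=
  insert 1 (insert r ((range m).image (· + 3) ∪ (range m).image (2 * m + 2 - ·))) ∪
    if p then {2 * m + 3} else ∅

def pairingWeight : ℕ := ∑ i ∈ range m, (i + 3) * (2 * m + 2 - τ i)

variable {m r τ}

theorem pairing_one : pairing m r τ 1 = r := if_pos rfl

variable (hr : 2 * m + 4 ≤ r)
include hr

theorem pairing_self : pairing m r τ r = 1 := by
  rw [pairing, if_neg (by omega), if_pos rfl]

theorem pairing_lower {i : ℕ} (hi : i < m) : pairing m r τ (i + 3) = 2 * m + 2 - τ i := by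
  rw [pairing, if_neg (by omega), if_neg (by omega), if_pos (by omega), Nat.add_sub_cancel]

theorem pairing_upper {j : ℕ} (hj : j < m) :
    pairing m r τ (2 * m + 2 - j) = τ.symm j + 3 := by
  rw [pairing, if_neg (by omega), if_neg (by omega), if_neg (by omega), if_pos (by omega),
    Nat.sub_sub_self (by omega)]

theorem pairing_centre : pairing m r τ (2 * m + 3) = 2 * m + 3 := by
  rw [pairing, if_neg (by omega), if_neg (by omega), if_neg (by omega), if_neg (by omega)]

variable (hτ : ∀ i, τ i < m ↔ i < m) {p : Prop} [Decidable p]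
include hτ

theorem pairing_spec {v : ℕ} (hv : v ∈ pairingSupport m r p) :
    pairing m r τ v ∈ pairingSupport m r p ∧ pairing m r τ (pairing m r τ v) = v := by
  simp only [pairingSupport, mem_union, mem_insert, mem_image, mem_range] at hv ⊢
  rcases hv with (rfl | rfl | ⟨i, hi, rfl⟩ | ⟨j, hj, rfl⟩) | hc
  · simp [pairing_one, pairing_self hr]
  · simp [pairing_one, pairing_self hr]
  · have hτi := (hτ i).2 hi
    rw [pairing_lower hr hi, pairing_upper hr hτi, symm_apply_apply]
    exact ⟨Or.inl (Or.inr (Or.inr (Or.inr ⟨τ i, hτi, rfl⟩))), rfl⟩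
  · have hτj : τ.symm j < m := by rw [← hτ, apply_symm_apply]; exact hj
    rw [pairing_upper hr hj, pairing_lower hr hτj, apply_symm_apply]
    exact ⟨Or.inl (Or.inr (Or.inr (Or.inl ⟨τ.symm j, hτj, rfl⟩))), rfl⟩
  · split_ifs at hc ⊢ with hp
    · rw [mem_singleton] at hc
      subst hc
      simp [pairing_centre hr]
    · simp at hc

theorem sum_pairingSupport :
    ∑ v ∈ pairingSupport m r p, v * pairing m r τ v =
      2 * r + 2 * pairingWeight m τ + if p then (2 * m + 3) ^ 2 else 0 := by
  have hlower : ∑ v ∈ (range m).image (· + 3), v * pairing m r τ v = pairingWeight m τ := by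
    rw [sum_image fun _ _ _ _ => Nat.add_right_cancel]
    exact sum_congr rfl fun i hi => by rw [pairing_lower hr (mem_range.1 hi)]
  have hupper : ∑ v ∈ (range m).image (2 * m + 2 - ·), v * pairing m r τ v =
      pairingWeight m τ := by
    rw [sum_image fun a ha b hb h => by simp only [mem_coe, mem_range] at ha hb; omega]
    refine (sum_equiv τ (fun i => by simp only [mem_range, hτ]) fun i hi => ?_).symm
    rw [pairing_upper hr ((hτ i).2 (mem_range.1 hi)), symm_apply_apply, mul_comm]
  have hdisj : Disjoint ((range m).image (· + 3)) ((range m).image (2 * m + 2 - ·)) := by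
    simp only [disjoint_left, mem_image, mem_range]
    rintro _ ⟨i, hi, rfl⟩ ⟨j, hj, h⟩
    omega
  rw [pairingSupport, sum_union, sum_insert, sum_insert, sum_union hdisj, hlower, hupper,
    pairing_one, pairing_self hr]
  · split_ifs <;> simp [pairing_centre hr] <;> ring
  all_goals (try split_ifs) <;>
    simp only [disjoint_left, mem_insert, mem_union, mem_image, mem_range, mem_singleton,
      notMem_empty] <;> grind

end Pairing

theorem six_mul_sum_range_mul_sub (C : ℤ) (m : ℕ) :
    6 * ∑ i ∈ range m, ((i : ℤ) + 3) * (C - i) =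
      3 * C * (m ^ 2 + 5 * m) - 2 * m ^ 3 - 6 * m ^ 2 + 8 * m := by
  induction m with
  | zero => simp
  | succ m ih => rw [sum_range_succ, mul_add, ih]; push_cast; ring

theorem six_mul_pairingWeight_le {m w : ℕ} {τ : Perm ℕ} (hτw : ∀ i, i < τ i + w) :
    6 * pairingWeight m τ ≤ 4 * m ^ 3 + 27 * m ^ 2 + 23 * m + w * (3 * m ^ 2 + 15 * m) := by
  have hle : pairingWeight m τ ≤ ∑ i ∈ range m, (i + 3) * (2 * m + 1 + w - i) :=
    sum_le_sum fun i _ => Nat.mul_le_mul_left _ (by have := hτw i; omega)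
  have hcast : ((∑ i ∈ range m, (i + 3) * (2 * m + 1 + w - i) : ℕ) : ℤ) =
      ∑ i ∈ range m, ((i : ℤ) + 3) * ((2 * m + 1 + w : ℤ) - i) := by
    push_cast
    refine sum_congr rfl fun i hi => ?_
    rw [Nat.cast_sub (by simp at hi; omega)]
    push_cast
    ring
  have hle' := (Nat.cast_le (α := ℤ)).2 hle
  rw [hcast] at hle'
  zify
  linear_combination 6 * hle' + six_mul_sum_range_mul_sub (2 * m + 1 + w) m

section Construction

variable (n m : ℕ) (τ : Perm ℕ)

def largePart : ℕ := (n - if Odd n then (2 * m + 3) ^ 2 else 0) / 2 - pairingWeight m τ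

def wilfOfPerm : Finset (ℕ × ℕ) :=
  (pairingSupport m (largePart n m τ) (Odd n)).image
    fun v => (v, pairing m (largePart n m τ) τ v)

variable {n m τ} (hA : 2 * pairingWeight m τ + (2 * m + 3) ^ 2 + 4 * m + 8 ≤ n)
include hA

theorem largePart_spec :
    2 * m + 4 ≤ largePart n m τ ∧
      2 * largePart n m τ + 2 * pairingWeight m τ + (if Odd n then (2 * m + 3) ^ 2 else 0) =
        n := by
  have hsq : (2 * m + 3) ^ 2 = 2 * (2 * m ^ 2 + 6 * m + 4) + 1 := by ring
  rw [largePart]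
  rcases Nat.even_or_odd n with hn | hn
  · rw [if_neg (Nat.not_odd_iff_even.2 hn)]
    have := Nat.even_iff.1 hn
    omega
  · rw [if_pos hn]
    have := Nat.odd_iff.1 hn
    omega

theorem wilfOfPerm_spec (hτ : ∀ i, τ i < m ↔ i < m) :
    IsWilfPartition n (wilfOfPerm n m τ) ∧ IsFixedWilf (wilfOfPerm n m τ) := by
  obtain ⟨hr, hsum⟩ := largePart_spec hA
  have h := isWilfPartition_graph (V := pairingSupport m (largePart n m τ) (Odd n))
    (f := pairing m (largePart n m τ) τ) (fun v hv => ?_)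
    (fun _ hv => (pairing_spec hr hτ hv).1) (fun _ hv => (pairing_spec hr hτ hv).2)
  · rwa [sum_pairingSupport hr hτ, hsum] at h
  · simp only [pairingSupport, mem_union, mem_insert, mem_image, mem_range] at hv
    split_ifs at hv <;> simp at hv <;> omega

theorem eq_of_wilfOfPerm_eq {τ' : Perm ℕ}
    (hA' : 2 * pairingWeight m τ' + (2 * m + 3) ^ 2 + 4 * m + 8 ≤ n)
    (hτ : ∀ i, τ i < m ↔ i < m) (hτ' : ∀ i, τ' i < m ↔ i < m)
    (h : wilfOfPerm n m τ = wilfOfPerm n m τ') {i : ℕ} (hi : i < m) : τ i = τ' i := by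
  have hmem : (i + 3, 2 * m + 2 - τ i) ∈ wilfOfPerm n m τ' := by
    rw [← h, wilfOfPerm, mem_image]
    refine ⟨i + 3, ?_, by rw [pairing_lower (largePart_spec hA).1 hi]⟩
    exact mem_union_left _ (mem_insert_of_mem (mem_insert_of_mem
      (mem_union_left _ (mem_image_of_mem _ (mem_range.2 hi)))))
  obtain ⟨v, -, hv⟩ := mem_image.1 hmem
  obtain ⟨rfl, hv⟩ := Prod.mk.inj hv
  rw [pairing_lower (largePart_spec hA').1 hi] at hv
  have := (hτ i).2 hi
  have := (hτ' i).2 hi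
  omega

end Construction

-- `weightBound m w / 3` bounds `2 * pairingWeight m τ + (2 * m + 3) ^ 2 + 4 * m + 8` whenever
-- `τ` moves no point down by `w` or more.
def weightBound (m w : ℕ) : ℕ :=
  4 * m ^ 3 + w * (3 * m ^ 2 + 15 * m) + 39 * m ^ 2 + 71 * m + 51

theorem factorial_pow_le_wilfFixedCount {n w K : ℕ} (hw : 0 < w)
    (hn : weightBound (K * w) w ≤ 3 * n) :
    w ! ^ K ≤ wilfFixedCount n := by
  have : NeZero w := ⟨hw.ne'⟩
  have hτ (σ : Fin K → Perm (Fin w)) (i : ℕ) : blockPerm σ i < K * w ↔ i < K * w :=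
    blockPerm_lt_iff σ
  have hA (σ : Fin K → Perm (Fin w)) :
      2 * pairingWeight (K * w) (blockPerm σ) + (2 * (K * w) + 3) ^ 2 + 4 * (K * w) + 8 ≤ n := by
    have := six_mul_pairingWeight_le (m := K * w) (lt_blockPerm_add σ)
    rw [weightBound] at hn
    nlinarith
  calc w ! ^ K = Nat.card (Fin K → Perm (Fin w)) := by simp [Fintype.card_perm]
    _ ≤ wilfFixedCount n :=
      card_le_wilfFixedCount (f := fun σ => wilfOfPerm n (K * w) (blockPerm σ))
        (fun σ σ' h => eq_of_blockPerm_eqOn fun _ hi =>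
          eq_of_wilfOfPerm_eq (hA σ) (hA σ') (hτ σ) (hτ σ') h hi)
        fun σ => wilfOfPerm_spec (hA σ) (hτ σ)

theorem weightBound_le {c d w m n : ℕ} (hwd : 2 * w ≤ d) (hd : 40 ≤ d) (hc : 72 ≤ c)
    (hmc : m + d ≤ c) (hn : 4 * c ^ 3 ≤ 3 * n) : weightBound m w ≤ 3 * n := by
  have hm : m ≤ c := by omega
  have hcube : m ^ 3 + d * c ^ 2 ≤ c ^ 3 := by
    obtain ⟨f, rfl⟩ := Nat.exists_eq_add_of_le hm
    have hexp : (m + f) ^ 3 = m ^ 3 + f * ((m + f) ^ 2 + (m + f) * m + m ^ 2) := by ring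
    have := Nat.mul_le_mul (show d ≤ f by omega)
      (Nat.le_add_right ((m + f) ^ 2) ((m + f) * m + m ^ 2))
    rw [hexp, add_assoc _ ((m + f) * m)]
    omega
  have hquad : 3 * m ^ 2 + 15 * m ≤ 4 * c ^ 2 := by nlinarith
  have hw : 2 * w * (3 * m ^ 2 + 15 * m) ≤ d * (4 * c ^ 2) := Nat.mul_le_mul hwd hquad
  have hlow : 39 * m ^ 2 + 71 * m + 51 ≤ d * c ^ 2 := by nlinarith
  rw [weightBound]
  nlinarith

noncomputable def scale (n : ℕ) : ℝ := (3 * n / 4) ^ ((1 : ℝ) / 3)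

noncomputable def scaleNat (n : ℕ) : ℕ := ⌊scale n⌋₊

noncomputable def logBound (n : ℕ) : ℕ := ⌊log n⌋₊ + 4

noncomputable def blockWidth (n : ℕ) : ℕ := scaleNat n / logBound n ^ 2 + 1

noncomputable def blockCount (n : ℕ) : ℕ :=
  (scaleNat n - scaleNat n / logBound n) / blockWidth n

theorem scale_nonneg (n : ℕ) : 0 ≤ scale n := by unfold scale; positivity

theorem scale_pow_three (n : ℕ) : scale n ^ 3 = 3 * n / 4 := by
  rw [scale, ← Real.rpow_natCast, ← Real.rpow_mul (by positivity)]
  norm_num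

theorem four_mul_scaleNat_pow_three_le (n : ℕ) : 4 * scaleNat n ^ 3 ≤ 3 * n := by
  have h := pow_le_pow_left₀ (Nat.cast_nonneg _) (Nat.floor_le (scale_nonneg n)) 3
  rw [scale_pow_three] at h
  have : (4 * scaleNat n ^ 3 : ℝ) ≤ 3 * n := by rw [scaleNat]; linarith
  exact_mod_cast this

theorem four_le_logBound (n : ℕ) : 4 ≤ logBound n := Nat.le_add_left 4 _

theorem mul_log_sub_one_le_log_factorial (w : ℕ) :
    (w : ℝ) * (log w - 1) ≤ log (w ! : ℝ) := by
  rcases w.eq_zero_or_pos with rfl | hw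
  · simp
  have h := Real.pow_div_factorial_le_exp _ (Nat.cast_nonneg w) w
  rw [div_le_iff₀ (by positivity)] at h
  have := log_le_log (by positivity) h
  rw [log_pow, log_mul (by positivity) (by positivity), log_exp] at this
  linarith

theorem eight_rpow_one_div_three : (8 : ℝ) ^ ((1 : ℝ) / 3) = 2 := by
  rw [show (8 : ℝ) = 2 ^ (3 : ℝ) by norm_num, ← Real.rpow_mul (by norm_num)]
  norm_num

theorem sixth_mul_rpow_mul_log_eq (n : ℕ) :
    1 / 6 * ((6 * n : ℕ) : ℝ) ^ ((1 : ℝ) / 3) * log n = scale n * (log n / 3) := by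
  have : ((6 * n : ℕ) : ℝ) = 8 * (3 * n / 4) := by push_cast; ring
  rw [this, Real.mul_rpow (by norm_num) (by positivity), eight_rpow_one_div_three, scale]
  ring

theorem rpow_div_two_le_scale (n : ℕ) : (n : ℝ) ^ ((1 : ℝ) / 3) / 2 ≤ scale n := by
  rw [← eight_rpow_one_div_three, ← Real.div_rpow (by positivity) (by norm_num)]
  exact Real.rpow_le_rpow (by positivity) (by linarith [(Nat.cast_nonneg n : (0 : ℝ) ≤ n)])
    (by norm_num)

section Params

variable {n : ℕ} (h : 100 * logBound n ^ 2 ≤ scaleNat n)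
include h

theorem blockParams_spec :
    2 * blockWidth n ≤ scaleNat n / logBound n ∧ 40 ≤ scaleNat n / logBound n ∧
      blockCount n * blockWidth n + scaleNat n / logBound n ≤ scaleNat n ∧
      scaleNat n < blockCount n * blockWidth n + 2 * (scaleNat n / logBound n) := by
  have hL := four_le_logBound n
  have hd : 100 * logBound n ≤ scaleNat n / logBound n :=
    (Nat.le_div_iff_mul_le (by omega)).2 (by nlinarith)
  have h2w : 2 * blockWidth n ≤ scaleNat n / logBound n := by
    have hdL := Nat.div_le_div_left (a := scaleNat n / logBound n) hL (by norm_num)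
    rw [blockWidth, sq, ← Nat.div_div_eq_div_mul]
    generalize scaleNat n / logBound n = d at *
    generalize d / logBound n = e at *
    omega
  have hdc := Nat.div_le_self (scaleNat n) (logBound n)
  have hlo := Nat.div_mul_le_self (scaleNat n - scaleNat n / logBound n) (blockWidth n)
  have hhi := Nat.lt_div_mul_add (a := scaleNat n - scaleNat n / logBound n)
    (show 0 < blockWidth n from Nat.succ_pos _)
  rw [← blockCount] at hlo hhi
  generalize scaleNat n / logBound n = d at *
  refine ⟨h2w, by omega, by omega, by omega⟩

theorem log_wilfFixedCount_ge :
    ((blockCount n * blockWidth n : ℕ) : ℝ) * (log (blockWidth n) - 1) ≤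
      log (wilfFixedCount n) := by
  obtain ⟨h2w, hd, hmc, -⟩ := blockParams_spec h
  have hc : 72 ≤ scaleNat n := by nlinarith [four_le_logBound n]
  have hcount := factorial_pow_le_wilfFixedCount (K := blockCount n) (Nat.succ_pos _)
    (weightBound_le h2w hd hc hmc (four_mul_scaleNat_pow_three_le n))
  calc ((blockCount n * blockWidth n : ℕ) : ℝ) * (log (blockWidth n) - 1)
      = blockCount n * (blockWidth n * (log (blockWidth n) - 1)) := by push_cast; ring
    _ ≤ blockCount n * log ((blockWidth n)! : ℝ) :=
        mul_le_mul_of_nonneg_left (mul_log_sub_one_le_log_factorial _) (by positivity)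
    _ = log (((blockWidth n)! ^ blockCount n : ℕ) : ℝ) := by push_cast; rw [log_pow]
    _ ≤ log (wilfFixedCount n) :=
        log_le_log (by positivity) (by exact_mod_cast hcount)

theorem scaleNat_bounds :
    1600 ≤ (scaleNat n : ℝ) ∧ (scaleNat n : ℝ) ≤ scale n ∧
      scale n < scaleNat n + 1 := by
  have : 1600 ≤ scaleNat n := by nlinarith [four_le_logBound n]
  exact ⟨by exact_mod_cast this, Nat.floor_le (scale_nonneg n), Nat.lt_floor_add_one _⟩

theorem scale_mul_le_blockCount_mul_blockWidth :
    scale n * (1 - 2 / logBound n - 1 / scale n) ≤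
      ((blockCount n * blockWidth n : ℕ) : ℝ) := by
  obtain ⟨-, -, -, hm⟩ := blockParams_spec h
  obtain ⟨hc, hcx, hxc⟩ := scaleNat_bounds h
  have hL : (4 : ℝ) ≤ logBound n := by exact_mod_cast four_le_logBound n
  have hd : ((scaleNat n / logBound n : ℕ) : ℝ) ≤ scale n / logBound n :=
    Nat.cast_div_le.trans (div_le_div_of_nonneg_right hcx (by positivity))
  have hm' : (scaleNat n : ℝ) < (blockCount n * blockWidth n : ℕ) +
      2 * ((scaleNat n / logBound n : ℕ) : ℝ) := by exact_mod_cast hm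
  have hx : scale n * (1 - 2 / logBound n - 1 / scale n) =
      scale n - 2 * (scale n / logBound n) - 1 := by
    have : scale n ≠ 0 := by linarith
    field_simp
  rw [hx]
  linarith

theorem log_blockWidth_sub_one_ge (hn : 0 < log n) :
    log n / 3 * (1 - (6 * log (logBound n) + 6) / log n) ≤ log (blockWidth n) - 1 := by
  obtain ⟨hc, hcx, hxc⟩ := scaleNat_bounds h
  have hL : (4 : ℝ) ≤ logBound n := by exact_mod_cast four_le_logBound n
  have hx0 : 0 < scale n := by linarith
  have hn0 : (0 : ℝ) < n := by
    rcases n.eq_zero_or_pos with rfl | hpos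
    · simp at hn
    · exact_mod_cast hpos
  have hw : (scaleNat n : ℝ) / (logBound n : ℝ) ^ 2 ≤ blockWidth n := by
    have := Nat.lt_div_mul_add (a := scaleNat n)
      (pow_pos (lt_of_lt_of_le (by norm_num) (four_le_logBound n)) 2)
    rw [div_le_iff₀ (by positivity)]
    exact_mod_cast
      (show scaleNat n ≤ blockWidth n * logBound n ^ 2 by rw [blockWidth]; linarith)
  have hlogw : log (scale n) - log 2 - 2 * log (logBound n) ≤ log (blockWidth n) :=
    calc log (scale n) - log 2 - 2 * log (logBound n)
        = log (scale n / 2 / (logBound n : ℝ) ^ 2) := by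
          rw [log_div (by positivity) (by positivity), log_div hx0.ne' (by norm_num), log_pow]
          push_cast
          ring
      _ ≤ log (blockWidth n) := log_le_log (by positivity)
          ((div_le_div_of_nonneg_right (by linarith) (by positivity)).trans hw)
  have hlogx : log (scale n) = log (3 * n / 4) / 3 := by
    rw [scale, log_rpow (by positivity)]
    ring
  have hlog34 : log n - log 2 ≤ log (3 * n / 4) := by
    rw [← log_div (by positivity) (by norm_num)]
    exact log_le_log (by positivity) (by linarith)
  have : log n / 3 * (1 - (6 * log (logBound n) + 6) / log n) =
      log n / 3 - 2 * log (logBound n) - 2 := by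
    field_simp
    ring
  linarith [Real.log_two_lt_d9]

end Params

theorem tendsto_log_natCast : Tendsto (fun n : ℕ => log n) atTop atTop :=
  tendsto_log_atTop.comp tendsto_natCast_atTop_atTop

theorem tendsto_scale : Tendsto scale atTop atTop :=
  tendsto_atTop_mono rpow_div_two_le_scale
    (((tendsto_rpow_atTop (by norm_num)).comp tendsto_natCast_atTop_atTop).atTop_div_const
      (by norm_num))

theorem tendsto_logBound : Tendsto (fun n => (logBound n : ℝ)) atTop atTop :=
  tendsto_atTop_mono (fun n => by
    have := Nat.lt_floor_add_one (log n)
    push_cast [logBound]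
    linarith) tendsto_log_natCast

theorem logBound_le {n : ℕ} (hn : 4 ≤ log n) : (logBound n : ℝ) ≤ 2 * log n := by
  have := Nat.floor_le (by linarith : 0 ≤ log n)
  push_cast [logBound]
  linarith

theorem eventually_sq_logBound_le : ∀ᶠ n in atTop, 100 * logBound n ^ 2 ≤ scaleNat n := by
  have hlo := (isLittleO_log_rpow_rpow_atTop 2 (by norm_num : (0 : ℝ) < 1 / 3)).def
    (by norm_num : (0 : ℝ) < 1 / 1000)
  filter_upwards [tendsto_natCast_atTop_atTop.eventually hlo,
    tendsto_log_natCast.eventually_ge_atTop 4] with n hn h4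
  rw [Real.norm_of_nonneg (by positivity), Real.norm_of_nonneg (by positivity),
    Real.rpow_two] at hn
  have hL := pow_le_pow_left₀ (Nat.cast_nonneg _) (logBound_le h4) 2
  have hx := rpow_div_two_le_scale n
  have hxc : scale n < scaleNat n + 1 := Nat.lt_floor_add_one _
  have : (100 * logBound n ^ 2 : ℝ) ≤ scaleNat n := by nlinarith
  exact_mod_cast this

theorem tendsto_log_logBound_div :
    Tendsto (fun n => (6 * log (logBound n) + 6) / log n) atTop (𝓝 0) := by
  have hreal : Tendsto (fun y : ℝ => (6 * log 2 + 6 + 6 * log y) / y) atTop (𝓝 0) := by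
    have h1 := (tendsto_const_nhds (x := 6 * log 2 + 6)).div_atTop tendsto_id
    have h2 := (tendsto_pow_log_div_mul_add_atTop 1 0 1 one_ne_zero).const_mul 6
    simpa [add_div, mul_div_assoc] using h1.add h2
  refine squeeze_zero' ?_ ?_ (hreal.comp tendsto_log_natCast)
  · filter_upwards [tendsto_log_natCast.eventually_ge_atTop 4] with n h4
    exact div_nonneg (by linarith [log_natCast_nonneg (logBound n)]) (by linarith)
  · filter_upwards [tendsto_log_natCast.eventually_ge_atTop 4] with n h4
    have : log (logBound n) ≤ log 2 + log (log n) := by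
      rw [← log_mul (by norm_num) (by linarith)]
      exact log_le_log (Nat.cast_pos.2 (lt_of_lt_of_le (by norm_num) (four_le_logBound n)))
        (logBound_le h4)
    exact div_le_div_of_nonneg_right (by linarith) (by linarith)

noncomputable def ratioBound (n : ℕ) : ℝ :=
  (1 - 2 / logBound n - 1 / scale n) * (1 - (6 * log (logBound n) + 6) / log n)

theorem tendsto_ratioBound : Tendsto ratioBound atTop (𝓝 1) := by
  have := (((tendsto_const_nhds (x := (1 : ℝ))).sub (tendsto_logBound.const_div_atTop 2)).sub
    (tendsto_scale.const_div_atTop 1)).mul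
    ((tendsto_const_nhds (x := (1 : ℝ))).sub tendsto_log_logBound_div)
  unfold ratioBound
  simpa using this

theorem eventually_ratioBound_mul_le : ∀ᶠ n in atTop,
    ratioBound n * (1 / 6 * ((6 * n : ℕ) : ℝ) ^ ((1 : ℝ) / 3) * log n) ≤
      log (wilfFixedCount n) := by
  filter_upwards [eventually_sq_logBound_le, tendsto_log_logBound_div.eventually_lt_const one_pos,
    tendsto_log_natCast.eventually_gt_atTop 0] with n h hq hn
  have hw := log_blockWidth_sub_one_ge h hn
  have hnonneg : 0 ≤ log n / 3 * (1 - (6 * log (logBound n) + 6) / log n) :=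
    mul_nonneg (by positivity) (by linarith)
  calc ratioBound n * (1 / 6 * ((6 * n : ℕ) : ℝ) ^ ((1 : ℝ) / 3) * log n)
      = scale n * (1 - 2 / logBound n - 1 / scale n) *
          (log n / 3 * (1 - (6 * log (logBound n) + 6) / log n)) := by
        rw [sixth_mul_rpow_mul_log_eq, ratioBound]
        ring
    _ ≤ ((blockCount n * blockWidth n : ℕ) : ℝ) * (log (blockWidth n) - 1) :=
        mul_le_mul (scale_mul_le_blockCount_mul_blockWidth h) hw hnonneg (Nat.cast_nonneg _)
    _ ≤ log (wilfFixedCount n) := log_wilfFixedCount_ge h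

end WilfFixed

open WilfFixed in
/-- `log F(n) ≥ (1/6)(6n)^{1/3} log n · (1 + o(1))` as `n → ∞`. -/
theorem log_wilfFixedCount_lower :
    ∃ e : ℕ → ℝ, Filter.Tendsto e Filter.atTop (nhds 0) ∧
      ∀ n : ℕ, Real.log (wilfFixedCount n) ≥
        (1 / 6) * ((6 * n : ℕ) : ℝ) ^ ((1 : ℝ) / 3) * Real.log n * (1 + e n) :=
  exists_tendsto_zero_mul_le (fun _ => log_natCast_nonneg _) tendsto_ratioBound
    eventually_ratioBound_mul_le
end

section
/- If a fixed-point Wilf partition of n has exactly r distinct off-diagonal part sizes p with p > m (where (p,m) are its part-multiplicity pairs), then r ≤ (1/2)(6n)^{1/3}. -/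
/-!
The off-diagonal pairs of a fixed point come in swapped couples `(p, m)`, `(m, p)`, so there are
`2r` of them, still with distinct positive parts and distinct positive multiplicities. Any `N` such
pairs have weight at least `N(N+1)(N+2)/6 ≥ N³/6`: lowering every part by one loses at most one
pair (the one with part `1`) and lowers the weight by the sum of the `N` distinct multiplicities,
which is at least `N(N+1)/2`. Hence `(2r)³ ≤ 6n`.
-/

open Finset

theorem Finset.card_mul_card_succ_le_two_mul_sum (s : Finset ℕ) (hs : 0 ∉ s) :
    #s * (#s + 1) ≤ 2 * ∑ a ∈ s, a := by
  induction s using Finset.induction_on_max with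
  | empty => simp
  | insert a s hlt ih =>
    have has : a ∉ s := fun h => (hlt a h).false
    have hcard : #s + 1 ≤ a := by
      have hsub : insert a s ⊆ Icc 1 a := by
        intro x hx
        have : x ≠ 0 := fun h => hs (h ▸ hx)
        rw [mem_Icc]
        rcases mem_insert.1 hx with rfl | hx
        · omega
        · exact ⟨by omega, (hlt x hx).le⟩
      simpa [has] using card_le_card hsub
    rw [card_insert_of_notMem has, sum_insert has]
    have := ih (fun h => hs (mem_insert_of_mem h))
    nlinarith

/- The parts are measured from an offset `c` so that the shift `p ↦ p - 1` can be iterated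
without re-indexing the set. -/
theorem Finset.mul_succ_mul_add_two_le_six_mul_sum_sub_mul (k c : ℕ) (Q : Finset (ℕ × ℕ))
    (hfst : ∀ q ∈ Q, c < q.1) (hsnd : ∀ q ∈ Q, 0 < q.2)
    (hfst_inj : Set.InjOn Prod.fst (Q : Set (ℕ × ℕ)))
    (hsnd_inj : Set.InjOn Prod.snd (Q : Set (ℕ × ℕ))) (hk : k ≤ #Q) :
    k * (k + 1) * (k + 2) ≤ 6 * ∑ q ∈ Q, (q.1 - c) * q.2 := by
  induction k generalizing c Q with
  | zero => simp
  | succ k ih =>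
    set Q' := Q.filter (fun q => c + 1 < q.1)
    have hQ' : k ≤ #Q' := by
      have hrest : #(Q.filter fun q => ¬ c + 1 < q.1) ≤ 1 := by
        refine card_le_one.2 fun a ha b hb => ?_
        rw [mem_filter] at ha hb
        exact hfst_inj ha.1 hb.1 (by have := hfst a ha.1; have := hfst b hb.1; omega)
      have : #Q' + #(Q.filter fun q => ¬ c + 1 < q.1) = #Q := card_filter_add_card_filter_not _
      omega
    have hshift := ih (c + 1) Q' (fun q hq => (mem_filter.1 hq).2)
      (fun q hq => hsnd q (filter_subset _ _ hq))
      (hfst_inj.mono (coe_subset.2 (filter_subset _ _)))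
      (hsnd_inj.mono (coe_subset.2 (filter_subset _ _))) hQ'
    have hsplit : ∑ q ∈ Q, (q.1 - c) * q.2 = ∑ q ∈ Q', (q.1 - (c + 1)) * q.2 + ∑ q ∈ Q, q.2 := by
      rw [sum_filter_of_ne fun q _ h => Nat.lt_of_sub_ne_zero (left_ne_zero_of_mul h),
        ← sum_add_distrib]
      refine sum_congr rfl fun q hq => ?_
      have := hfst q hq
      rw [show q.1 - c = q.1 - (c + 1) + 1 by omega]
      ring
    have hsum_snd : (k + 1) * (k + 2) ≤ 2 * ∑ q ∈ Q, q.2 := by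
      have := (Q.image Prod.snd).card_mul_card_succ_le_two_mul_sum
        fun h => by obtain ⟨q, hq, h0⟩ := mem_image.1 h; exact (hsnd q hq).ne' h0
      rw [card_image_of_injOn hsnd_inj, sum_image hsnd_inj] at this
      exact le_trans (Nat.mul_le_mul hk (by omega)) this
    rw [hsplit]
    nlinarith

theorem Finset.card_pow_three_le_six_mul_sum_mul (Q : Finset (ℕ × ℕ))
    (hpos : ∀ q ∈ Q, 0 < q.1 ∧ 0 < q.2)
    (hfst_inj : Set.InjOn Prod.fst (Q : Set (ℕ × ℕ)))
    (hsnd_inj : Set.InjOn Prod.snd (Q : Set (ℕ × ℕ))) :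
    #Q ^ 3 ≤ 6 * ∑ q ∈ Q, q.1 * q.2 := by
  have := mul_succ_mul_add_two_le_six_mul_sum_sub_mul #Q 0 Q (fun q hq => (hpos q hq).1)
    (fun q hq => (hpos q hq).2) hfst_inj hsnd_inj le_rfl
  simp only [Nat.sub_zero] at this
  nlinarith

theorem IsFixedWilf.card_filter_ne_eq_two_mul {S : Finset (ℕ × ℕ)} (hfix : IsFixedWilf S) :
    #(S.filter fun q => q.1 ≠ q.2) = 2 * #(S.filter fun q => q.2 < q.1) := by
  have hswap : #(S.filter fun q => q.1 < q.2) = #(S.filter fun q => q.2 < q.1) :=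
    have swap_mem {q : ℕ × ℕ} (hq : q ∈ S) : q.swap ∈ S := hfix q hq
    card_nbij' Prod.swap Prod.swap (fun q hq => by simp_all) (fun q hq => by simp_all)
      (fun _ _ => rfl) (fun _ _ => rfl)
  rw [filter_congr (q := fun q => q.2 < q.1 ∨ q.1 < q.2) (fun q _ => by omega), filter_or,
    card_union_of_disjoint (disjoint_filter.2 fun q _ h => by omega), hswap]
  ring

/-- If a fixed-point Wilf partition of `n` has exactly `r` off-diagonal pairs
`(p,m)` with `p > m`, then `r ≤ (1/2)(6n)^{1/3}`. -/
theorem fixed_wilf_off_diagonal_bound (n : ℕ) (S : Finset (ℕ × ℕ))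
    (hS : IsWilfPartition n S) (hfix : IsFixedWilf S) (r : ℕ)
    (hr : r = (S.filter (fun q => q.2 < q.1)).card) :
    (r : ℝ) ≤ (1 / 2) * ((6 * n : ℕ) : ℝ) ^ ((1 : ℝ) / 3) := by
  obtain ⟨hpos, hfst_inj, hsnd_inj, rfl⟩ := hS
  set Q := S.filter fun q => q.1 ≠ q.2
  have hQS : Q ⊆ S := filter_subset _ _
  have hcube : (2 * r) ^ 3 ≤ 6 * ∑ q ∈ S, q.1 * q.2 := calc
    (2 * r) ^ 3 = #Q ^ 3 := by rw [hr, hfix.card_filter_ne_eq_two_mul]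
    _ ≤ 6 * ∑ q ∈ Q, q.1 * q.2 :=
      Q.card_pow_three_le_six_mul_sum_mul (fun q hq => hpos q (hQS hq))
        (fun q hq q' hq' => hfst_inj q (hQS hq) q' (hQS hq'))
        (fun q hq q' hq' => hsnd_inj q (hQS hq) q' (hQS hq'))
    _ ≤ 6 * ∑ q ∈ S, q.1 * q.2 := Nat.mul_le_mul_left 6 (sum_le_sum_of_subset hQS)
  have h2r : (2 * r : ℝ) ≤ ((6 * ∑ q ∈ S, q.1 * q.2 : ℕ) : ℝ) ^ (3 : ℝ)⁻¹ := by
    rw [Real.le_rpow_inv_iff_of_pos (by positivity) (by positivity) (by norm_num)]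
    exact_mod_cast hcube
  rw [one_div (3 : ℝ)]
  linarith
end
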